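/- arXiv:1804.07091 — 2 statements merged into one kernel-verified Lean document; each statement's English description precedes it below -/
import Mathlib

section
/- Let n ≥ 2, d ≥ 1, and let P be the product measure over the index set {1,…,n} × {1,…,d} of copies of the standard normal distribution N(0,1), modeling a d-variate time series (x_t)_{t=1}^n of i.i.d. standard Gaussian samples. Let I ⊆ {1,…,n} with |I| = m, 1 ≤ m ≤ n−1, and Ω = {1,…,n} \ I, and define per-coordinate empirical means μ_I = (1/m) Σ_{t ∈ I} x_t ∈ ℝ^d and μ_Ω = (1/(n−m)) Σ_{t ∈ Ω} x_t ∈ ℝ^d. Then the expectation under P of the Kullback-Leibler score ½ ‖μ_Ω − μ_I‖² equals (d/2) · (1/m + 1/(n−m)); in particular, it is inversely proportional to the interval length m in the limit n → ∞, so the KL divergence is systematically biased towards smaller intervals. -/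
open MeasureTheory ProbabilityTheory

/-!
For each coordinate `i`, the difference of the two empirical means is `∑ₜ wₜ x₍ₜ,ᵢ₎` with
`wₜ = -1/m` on `I` and `wₜ = 1/(n-m)` off `I`: a centred linear combination of independent
standard normals. Its second moment is therefore its variance `∑ₜ wₜ² = 1/m + 1/(n-m)`, and
summing over the `d` coordinates gives the claim.
-/

section LinearCombination

variable {ι κ : Type*} [Fintype ι] [Fintype κ] {ν : Measure ℝ} [IsProbabilityMeasure ν]

lemma memLp_const_mul_eval_pi (hν : MemLp id 2 ν) (c : ℝ) (i : ι) :
    MemLp (fun x : ι → ℝ => c * x i) 2 (Measure.pi fun _ : ι => ν) :=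
  (hν.comp_measurePreserving (measurePreserving_eval _ i)).const_mul c

lemma memLp_sum_mul_eval_pi (hν : MemLp id 2 ν) (e : κ → ι) (w : κ → ℝ) :
    MemLp (fun x => ∑ t, w t * x (e t)) 2 (Measure.pi fun _ : ι => ν) :=
  memLp_finsetSum _ fun t _ => memLp_const_mul_eval_pi hν (w t) (e t)

lemma integral_sum_mul_eval_pi (hν : Integrable id ν) (hν₀ : ∫ y, y ∂ν = 0) (e : κ → ι)
    (w : κ → ℝ) : ∫ x, ∑ t, w t * x (e t) ∂(Measure.pi fun _ : ι => ν) = 0 := by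
  rw [integral_finsetSum _ fun t _ => (integrable_eval hν).const_mul (w t)]
  simp [integral_const_mul, integral_eval, hν₀]

lemma variance_sum_mul_eval_pi (hν : MemLp id 2 ν) {e : κ → ι} (he : e.Injective)
    (w : κ → ℝ) :
    Var[fun x => ∑ t, w t * x (e t); Measure.pi fun _ : ι => ν] =
      (∑ t, w t ^ 2) * Var[id; ν] := by
  have hindep : iIndepFun (fun t (x : ι → ℝ) => w t * x (e t)) (Measure.pi fun _ : ι => ν) :=
    ((iIndepFun_pi (μ := fun _ : ι => ν) (X := fun _ => id) fun _ => aemeasurable_id).precomp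
      he).comp (fun t (y : ℝ) => w t * y) fun _ => measurable_const.mul measurable_id
  have hsum : (fun x : ι → ℝ => ∑ t, w t * x (e t)) = ∑ t, fun x => w t * x (e t) := by
    ext x; simp
  rw [hsum, IndepFun.variance_sum (fun t _ => memLp_const_mul_eval_pi hν (w t) (e t))
    fun s _ t _ hst => hindep.indepFun hst, Finset.sum_mul]
  refine Finset.sum_congr rfl fun t _ => ?_
  have hvar := (measurePreserving_eval (fun _ : ι => ν) (e t)).variance_fun_comp
    (f := id) aemeasurable_id
  rw [variance_const_mul, ← hvar]
  rfl

lemma integral_sq_sum_mul_eval_pi (hν : MemLp id 2 ν) (hν₀ : ∫ y, y ∂ν = 0) {e : κ → ι}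
    (he : e.Injective) (w : κ → ℝ) :
    ∫ x, (∑ t, w t * x (e t)) ^ 2 ∂(Measure.pi fun _ : ι => ν) =
      (∑ t, w t ^ 2) * Var[id; ν] := by
  rw [← variance_sum_mul_eval_pi hν he w, variance_of_integral_eq_zero
    (memLp_sum_mul_eval_pi hν e w).aemeasurable
    (integral_sum_mul_eval_pi (hν.integrable one_le_two) hν₀ e w)]

end LinearCombination

section Weights

variable {κ : Type*} [Fintype κ] [DecidableEq κ]

lemma Finset.mul_sum_compl_sub_mul_sum (s : Finset κ) (a b : ℝ) (f : κ → ℝ) :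
    b * ∑ t ∈ sᶜ, f t - a * ∑ t ∈ s, f t = ∑ t, (if t ∈ s then -a else b) * f t := by
  simp only [ite_mul, Finset.sum_ite, Finset.filter_mem_eq_inter, Finset.univ_inter,
    Finset.filter_not, ← Finset.compl_eq_univ_sdiff, ← Finset.mul_sum]
  ring

lemma Finset.sum_ite_mem_sq (s : Finset κ) (a b : ℝ) :
    ∑ t, (if t ∈ s then a else b) ^ 2 = s.card * a ^ 2 + sᶜ.card * b ^ 2 := by
  simp only [apply_ite (· ^ 2), Finset.sum_ite, Finset.filter_mem_eq_inter, Finset.univ_inter,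
    Finset.filter_not, ← Finset.compl_eq_univ_sdiff, Finset.sum_const, nsmul_eq_mul]

end Weights

theorem kl_score_expectation_general (n d : ℕ)
    (I : Finset (Fin n)) (m : ℕ) (hm : 1 ≤ m) (hmn : m ≤ n - 1) (hI : I.card = m) :
    (∫ x : Fin n × Fin d → ℝ,
        (1 / 2) * ∑ i : Fin d,
          ((1 / ((n - m : ℕ) : ℝ)) * ∑ t ∈ Iᶜ, x (t, i)
            - (1 / (m : ℝ)) * ∑ t ∈ I, x (t, i)) ^ 2
      ∂(Measure.pi (fun _ : Fin n × Fin d => gaussianReal 0 1)))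
    = ((d : ℝ) / 2) * (1 / (m : ℝ) + 1 / ((n - m : ℕ) : ℝ)) := by
  have hm₀ : (m : ℝ) ≠ 0 := Nat.cast_ne_zero.mpr (by omega)
  have hnm₀ : ((n - m : ℕ) : ℝ) ≠ 0 := Nat.cast_ne_zero.mpr (by omega)
  set w : Fin n → ℝ := fun t => if t ∈ I then -(1 / (m : ℝ)) else 1 / ((n - m : ℕ) : ℝ)
  have hw : ∑ t, w t ^ 2 = 1 / (m : ℝ) + 1 / ((n - m : ℕ) : ℝ) := by
    rw [Finset.sum_ite_mem_sq, Finset.card_compl, hI, Fintype.card_fin]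
    field_simp
  simp_rw [Finset.mul_sum_compl_sub_mul_sum]
  have hν := memLp_id_gaussianReal (μ := 0) (v := 1) 2
  rw [integral_const_mul, integral_finsetSum _ fun i _ =>
    (memLp_sum_mul_eval_pi hν (fun t => (t, i)) w).integrable_sq]
  simp only [integral_sq_sum_mul_eval_pi hν integral_id_gaussianReal (Prod.mk_left_injective _),
    hw, variance_id_gaussianReal, NNReal.coe_one, Finset.sum_const, Finset.card_univ,
    Fintype.card_fin]
  ring

/-- For a `d`-variate time series of `n` i.i.d. standard normal samples, the
expected Kullback-Leibler score `½‖μ_Ω − μ_I‖²` of an interval `I` of length `m`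
(with complement `Ω`) equals `(d/2)·(1/m + 1/(n−m))`: the KL divergence is
systematically biased towards smaller intervals. -/
theorem kl_score_expectation (n d : ℕ) (hn : 2 ≤ n) (hd : 1 ≤ d)
    (I : Finset (Fin n)) (m : ℕ) (hm : 1 ≤ m) (hmn : m ≤ n - 1) (hI : I.card = m) :
    (∫ x : Fin n × Fin d → ℝ,
        (1 / 2) * ∑ i : Fin d,
          ((1 / ((n - m : ℕ) : ℝ)) * ∑ t ∈ Iᶜ, x (t, i)
            - (1 / (m : ℝ)) * ∑ t ∈ I, x (t, i)) ^ 2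
      ∂(Measure.pi (fun _ : Fin n × Fin d => gaussianReal 0 1)))
    = ((d : ℝ) / 2) * (1 / (m : ℝ) + 1 / ((n - m : ℕ) : ℝ)) :=
  kl_score_expectation_general n d I m hm hmn hI
end

section
/- Let n ≥ 2, d ≥ 1, and let P be the product measure over the index set {1,…,n} × {1,…,d} of copies of the standard normal distribution N(0,1), modeling a d-variate time series (x_t)_{t=1}^n of i.i.d. standard Gaussian samples. Let I ⊆ {1,…,n} with |I| = m, 1 ≤ m ≤ n−1, and Ω = {1,…,n} \ I, with per-coordinate empirical means μ_I = (1/m) Σ_{t ∈ I} x_t and μ_Ω = (1/(n−m)) Σ_{t ∈ Ω} x_t. Then the expectation under P of the unbiased Kullback-Leibler score 2m · ½ ‖μ_Ω − μ_I‖² equals d · n / (n − m); in particular, for fixed n and d this expectation depends on m only through the factor n/(n−m), which converges to d independently of m as n → ∞. -/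
/-!
The score is `m · ∑ᵢ Yᵢ²` with `Yᵢ = ∑ₜ wₜ x₍ₜ,ᵢ₎`, where `wₜ = -1/m` on `I` and `1/(n-m)` off `I`.
Each `Yᵢ` is a centred linear form in independent standard normals, so
`𝔼 Yᵢ² = Var Yᵢ = ∑ₜ wₜ² = 1/m + 1/(n-m)`, and `m · d · (1/m + 1/(n-m)) = d n/(n-m)`.
-/

open MeasureTheory ProbabilityTheory Finset Function

section LinearForm

variable {ι κ : Type*} [Fintype ι] {μ : Measure ℝ} [IsProbabilityMeasure μ]

lemma memLp_sum_mul_eval_pi_s11 {p : ENNReal} (hμ : MemLp id p μ) (g : κ → ι) (s : Finset κ)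
    (a : κ → ℝ) :
    MemLp (fun x => ∑ k ∈ s, a k * x (g k)) p (Measure.pi fun _ : ι => μ) :=
  memLp_finsetSum s fun k _ =>
    (hμ.const_mul (a k)).comp_measurePreserving (measurePreserving_eval _ (g k))

lemma integral_sq_sum_mul_eval_pi_s11 (hμ : ∫ y, y ∂μ = 0) (hμ₂ : MemLp id 2 μ) {g : κ → ι}
    (hg : Injective g) (s : Finset κ) (a : κ → ℝ) :
    ∫ x, (∑ k ∈ s, a k * x (g k)) ^ 2 ∂(Measure.pi fun _ : ι => μ)
      = (∑ k ∈ s, a k ^ 2) * Var[id; μ] := by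
  set X : κ → (ι → ℝ) → ℝ := fun k x => a k * x (g k)
  have hX : ∀ k ∈ s, MemLp (X k) 2 (Measure.pi fun _ : ι => μ) := fun k _ =>
    (hμ₂.const_mul (a k)).comp_measurePreserving (measurePreserving_eval _ (g k))
  have hmean : ∫ x, ∑ k ∈ s, X k x ∂(Measure.pi fun _ : ι => μ) = 0 := by
    rw [integral_finsetSum s fun k hk => (hX k hk).integrable one_le_two]
    simp [X, integral_const_mul, integral_eval, hμ]
  have hindep : Set.Pairwise s fun k l => X k ⟂ᵢ[Measure.pi fun _ : ι => μ] X l :=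
    fun k _ l _ hkl => ((iIndepFun_pi (X := fun _ => id) fun _ => aemeasurable_id).indepFun
      (hg.ne hkl)).comp (measurable_const_mul (a k)) (measurable_const_mul (a l))
  calc ∫ x, (∑ k ∈ s, X k x) ^ 2 ∂(Measure.pi fun _ : ι => μ)
      = Var[∑ k ∈ s, X k; Measure.pi fun _ : ι => μ] := by
        rw [variance_of_integral_eq_zero]
        · simp only [Finset.sum_apply]
        · exact (memLp_finsetSum' s hX).aemeasurable
        · simpa only [Finset.sum_apply] using hmean
    _ = ∑ k ∈ s, a k ^ 2 * Var[id; μ] := by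
        rw [IndepFun.variance_sum hX hindep]
        refine Finset.sum_congr rfl fun k _ => ?_
        rw [variance_const_mul,
          ← (measurePreserving_eval (fun _ => μ) (g k)).variance_fun_comp (f := id)
            aemeasurable_id]
        rfl
    _ = (∑ k ∈ s, a k ^ 2) * Var[id; μ] := (Finset.sum_mul ..).symm

end LinearForm

section MeanDifference

variable {α : Type*} [Fintype α] [DecidableEq α]

noncomputable def meanDiffWeight (s : Finset α) (t : α) : ℝ :=
  if t ∈ s then -(1 / #s) else 1 / #sᶜ

lemma sum_meanDiffWeight_eq (s : Finset α) (f : α → ℝ → ℝ) :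
    ∑ t, f t (meanDiffWeight s t) = ∑ t ∈ s, f t (-(1 / #s)) + ∑ t ∈ sᶜ, f t (1 / #sᶜ) := by
  rw [← sum_add_sum_compl s]
  congr 1 <;> refine sum_congr rfl fun t ht => ?_
  · rw [meanDiffWeight, if_pos ht]
  · rw [meanDiffWeight, if_neg (mem_compl.1 ht)]

lemma sum_meanDiffWeight_mul (s : Finset α) (f : α → ℝ) :
    ∑ t, meanDiffWeight s t * f t = 1 / #sᶜ * ∑ t ∈ sᶜ, f t - 1 / #s * ∑ t ∈ s, f t := by
  rw [sum_meanDiffWeight_eq s fun t w => w * f t, mul_sum, mul_sum]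
  simp only [neg_mul, sum_neg_distrib]
  ring

lemma sum_meanDiffWeight_sq (s : Finset α) :
    ∑ t, meanDiffWeight s t ^ 2 = 1 / #s + 1 / #sᶜ := by
  have key : ∀ k : ℕ, (k : ℝ) * (1 / k) ^ 2 = 1 / k := fun k => by
    rcases eq_or_ne (k : ℝ) 0 with hk | hk
    · simp [hk]
    · field_simp
  rw [sum_meanDiffWeight_eq s fun _ w => w ^ 2]
  simp only [sum_const, nsmul_eq_mul, neg_sq, key]

end MeanDifference

theorem unbiased_kl_score_expectation_general (n d : ℕ)
    (I : Finset (Fin n)) (m : ℕ) (hm : 1 ≤ m) (hmn : m ≤ n - 1) (hI : I.card = m) :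
    (∫ x : Fin n × Fin d → ℝ,
        2 * (m : ℝ) * ((1 / 2) * ∑ i : Fin d,
          ((1 / ((n - m : ℕ) : ℝ)) * ∑ t ∈ Iᶜ, x (t, i)
            - (1 / (m : ℝ)) * ∑ t ∈ I, x (t, i)) ^ 2)
      ∂(Measure.pi (fun _ : Fin n × Fin d => gaussianReal 0 1)))
    = (d : ℝ) * n / ((n - m : ℕ) : ℝ) := by
  subst hI
  have hcompl : n - #I = #Iᶜ := by simp [card_compl]
  have hI₀ : (#I : ℝ) ≠ 0 := Nat.cast_ne_zero.2 (by omega)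
  have hIc₀ : (#Iᶜ : ℝ) ≠ 0 := Nat.cast_ne_zero.2 (by omega)
  have hcard : (n : ℝ) = #I + #Iᶜ := by
    exact_mod_cast ((card_add_card_compl I).trans (Fintype.card_fin n)).symm
  simp_rw [hcompl, ← sum_meanDiffWeight_mul]
  rw [integral_const_mul, integral_const_mul, integral_finsetSum _ fun i _ =>
    (memLp_sum_mul_eval_pi_s11 (memLp_id_gaussianReal 2) _ _ _).integrable_sq]
  simp only [integral_sq_sum_mul_eval_pi_s11 integral_id_gaussianReal (memLp_id_gaussianReal 2)
      (Prod.mk_left_injective _), sum_meanDiffWeight_sq, variance_id_gaussianReal,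
    NNReal.coe_one, mul_one, sum_const, card_univ, Fintype.card_fin, nsmul_eq_mul]
  rw [hcard]
  field_simp
  ring

/-- For a `d`-variate time series of `n` i.i.d. standard normal samples, the
expected *unbiased* Kullback-Leibler score `2m · ½‖μ_Ω − μ_I‖²` of an interval `I`
of length `m` (with complement `Ω`) equals `d·n/(n−m)`, which depends on `m` only
through the factor `n/(n−m)` and converges to `d` as `n → ∞`. -/
theorem unbiased_kl_score_expectation (n d : ℕ) (hn : 2 ≤ n) (hd : 1 ≤ d)
    (I : Finset (Fin n)) (m : ℕ) (hm : 1 ≤ m) (hmn : m ≤ n - 1) (hI : I.card = m) :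
    (∫ x : Fin n × Fin d → ℝ,
        2 * (m : ℝ) * ((1 / 2) * ∑ i : Fin d,
          ((1 / ((n - m : ℕ) : ℝ)) * ∑ t ∈ Iᶜ, x (t, i)
            - (1 / (m : ℝ)) * ∑ t ∈ I, x (t, i)) ^ 2)
      ∂(Measure.pi (fun _ : Fin n × Fin d => gaussianReal 0 1)))
    = (d : ℝ) * n / ((n - m : ℕ) : ℝ) :=
  unbiased_kl_score_expectation_general n d I m hm hmn hI
end
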